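/- Fix integers R ≥ 1 and K ≥ 1, and let each edge e of a star graph be assigned an R-tuple π(e) ∈ {0,...,K-1}^R via an injective map π. Define the star label of e as the set consisting of all pairs (r, π_r(e)) for 1 ≤ r ≤ R together with all triples (r, s, (π_r(e) + π_s(e)) mod K) for 1 ≤ r < s ≤ R. Let e and f be two distinct edges (forming a shortest path of length 2 through the centre of the star) and let g be any edge with [g] ⊆ [e] ∪ [f]. Then g = e or g = f. -/
import Mathlib


/-- The universal set for the star labelling: pairs `(r, k)` and triples `(r, s, k)`. -/
abbrev StarU (R K : ℕ) := (Fin R × ZMod K) ⊕ (Fin R × Fin R × ZMod K)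

/-- The star label of an edge `e`: all pairs `(r, π_r(e))` together with all
triples `(r, s, π_r(e) + π_s(e) mod K)` for `r < s`. -/
def starLabel {E : Type*} {R K : ℕ} (π : E → Fin R → ZMod K) (e : E) :
    Set (StarU R K) :=
  {x | (∃ r : Fin R, x = Sum.inl (r, π e r)) ∨
       (∃ r s : Fin R, r < s ∧ x = Sum.inr (r, s, π e r + π e s))}

/-- Star labelling has no false positives on paths of length 2: if `e ≠ f` and
`[g] ⊆ [e] ∪ [f]` then `g = e` or `g = f`. -/
theorem star_label_no_false_positive_two {E : Type*} (R K : ℕ) (hR : 1 ≤ R) (hK : 1 ≤ K)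
    (π : E → Fin R → ZMod K) (hπ : Function.Injective π)
    (e f g : E) (hef : e ≠ f)
    (hsub : starLabel π g ⊆ starLabel π e ∪ starLabel π f) :
    g = e ∨ g = f := by
  by_contra hcon
  push_neg at hcon
  obtain ⟨hge, hgf⟩ := hcon
  have hne : π g ≠ π e := fun h => hge (hπ h)
  have hnf : π g ≠ π f := fun h => hgf (hπ h)
  -- pair facts
  have pair : ∀ r : Fin R, π g r = π e r ∨ π g r = π f r := by
    intro r
    have hm := hsub (Or.inl ⟨r, rfl⟩)
    rcases hm with h | h <;> rcases h with ⟨r', hr'⟩ | ⟨r', s', _, hr'⟩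
    · obtain ⟨h1, h2⟩ := Prod.mk.injEq .. ▸ Sum.inl.inj hr'
      subst h1; exact Or.inl h2
    · exact absurd hr' (by simp)
    · obtain ⟨h1, h2⟩ := Prod.mk.injEq .. ▸ Sum.inl.inj hr'
      subst h1; exact Or.inr h2
    · exact absurd hr' (by simp)
  have triple : ∀ r s : Fin R, r < s →
      π g r + π g s = π e r + π e s ∨ π g r + π g s = π f r + π f s := by
    intro r s hrs
    have hm := hsub (Or.inr ⟨r, s, hrs, rfl⟩)
    rcases hm with h | h <;> rcases h with ⟨r', hr'⟩ | ⟨r', s', _, hr'⟩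
    · exact absurd hr' (by simp)
    · obtain ⟨h1, h2, h3⟩ := by simpa using Sum.inr.inj hr'
      subst h1; subst h2; exact Or.inl h3
    · exact absurd hr' (by simp)
    · obtain ⟨h1, h2, h3⟩ := by simpa using Sum.inr.inj hr'
      subst h1; subst h2; exact Or.inr h3
  obtain ⟨r, hr⟩ := Function.ne_iff.mp hne
  obtain ⟨s, hs⟩ := Function.ne_iff.mp hnf
  have hgr : π g r = π f r := (pair r).resolve_left hr
  have hgs : π g s = π e s := (pair s).resolve_right hs
  rcases lt_trichotomy r s with h | h | h
  · rcases triple r s h with ht | ht <;> rw [hgr, hgs] at ht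
    · exact hr (hgr.trans (add_right_cancel ht))
    · exact hs (hgs.trans (add_left_cancel ht))
  · subst h; exact hr hgs
  · rcases triple s r h with ht | ht <;> rw [hgr, hgs] at ht
    · exact hr (hgr.trans (add_left_cancel ht))
    · exact hs (hgs.trans (add_right_cancel ht))
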